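/- An initial cube can become non-derivable after clause addition while a derived cube remains derivable: for ψ = ∃x₁∀y₈∃x₅,x₂,x₆,x₄. (y₈∨¬x₅)∧(x₂∨¬x₆)∧(¬x₁∨x₄)∧(¬y₈∨¬x₄)∧(x₁∨x₆), the assignment A₃ = {¬x₁,y₈,¬x₅,x₂,x₆,¬x₄} is a model of ψ but not of ψ₃ := ψ ∧ (x₄∨x₅); nevertheless the cube (¬x₁ ∧ y₈) has a cube derivation from ψ₃ (via the model {¬x₁,y₈,x₅,x₂,x₆,¬x₄} and existential reduction). -/

import Mathlib

/-- Variables are natural numbers. -/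
abbrev Var := Nat

/-- A literal: a variable with a polarity (`pos = true` means positive). -/
structure Lit where
  var : Var
  pos : Bool
deriving DecidableEq, Repr

abbrev Clause := List Lit
abbrev Cube := List Lit
abbrev CNF := List Clause

abbrev Assignment := Var → Bool

def Lit.eval (α : Assignment) (l : Lit) : Bool :=
  if l.pos then α l.var else !(α l.var)

def Clause.eval (α : Assignment) (C : Clause) : Bool := C.any (Lit.eval α)

def Cube.evalCube (α : Assignment) (C : Cube) : Bool := C.all (Lit.eval α)

def CNF.eval (α : Assignment) (φ : CNF) : Bool := φ.all (Clause.eval α)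

/-- A flat quantifier prefix: list of (quantifier, variable); `true` = ∃, `false` = ∀. -/
abbrev QPrefix := List (Bool × Var)

/-- Recursive semantics of closed prenex QBFs, relative to an ambient assignment `α`. -/
def QSat (α : Assignment) : QPrefix → (Assignment → Bool) → Prop
  | [], m => m α = true
  | (true, x) :: p, m => ∃ b, QSat (Function.update α x b) p m
  | (false, x) :: p, m => ∀ b, QSat (Function.update α x b) p m

/-- Satisfiability of a closed prenex formula. -/
def Sat (L : QPrefix) (m : Assignment → Bool) : Prop :=
  QSat (fun _ => false) L m

def pvars (L : QPrefix) : List Var := L.map Prod.snd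

/-- The quantifier of a variable in the prefix (`true` = ∃). -/
def quantOf (L : QPrefix) (x : Var) : Bool :=
  ((L.find? (fun p => p.2 == x)).map Prod.fst).getD true

/-- Position of a variable in the linear prefix ordering. -/
def varIdx (L : QPrefix) (x : Var) : Nat := (pvars L).idxOf x

def Clause.vars (C : Clause) : List Var := C.map Lit.var
def CNF.vars (φ : CNF) : List Var := φ.flatMap Clause.vars

/-- A closed PCNF: all matrix variables are quantified, and no variable twice. -/
def Closed (L : QPrefix) (φ : CNF) : Prop :=
  (∀ v ∈ CNF.vars φ, v ∈ pvars L) ∧ (pvars L).Nodup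

def existLits (L : QPrefix) (C : List Lit) : List Lit :=
  C.filter (fun l => quantOf L l.var)

def univLits (L : QPrefix) (C : List Lit) : List Lit :=
  C.filter (fun l => !(quantOf L l.var))

/-- Universal reduction of a clause: remove universal literals larger than all
existential literals of the clause. -/
def univRed (L : QPrefix) (C : Clause) : Clause :=
  C.filter (fun l =>
    !((!(quantOf L l.var)) &&
      (existLits L C).all (fun l' => decide (varIdx L l'.var < varIdx L l.var))))

/-- Existential reduction of a cube: remove existential literals larger than all
universal literals of the cube. -/
def exRed (L : QPrefix) (C : Cube) : Cube :=
  C.filter (fun l =>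
    !((quantOf L l.var) &&
      (univLits L C).all (fun l' => decide (varIdx L l'.var < varIdx L l.var))))

def Lit.neg (l : Lit) : Lit := ⟨l.var, !l.pos⟩

/-- Tautological clause / contradictory cube: contains complementary literals. -/
def Tauto (C : List Lit) : Prop := ∃ l ∈ C, Lit.neg l ∈ C

/-- Tentative Q-qResolvent of two clauses on existential pivot `p`. -/
def qResolvent (L : QPrefix) (C₁ C₂ : Clause) (p : Var) : Clause :=
  (univRed L C₁).filter (fun l => l ≠ ⟨p, true⟩) ++
  (univRed L C₂).filter (fun l => l ≠ ⟨p, false⟩)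

/-- Q-resolution derivations from the clauses of `φ`. -/
inductive QDer (L : QPrefix) (φ : CNF) : Clause → Prop
  | ax {C} : C ∈ φ → QDer L φ C
  | ur {C} : QDer L φ C → QDer L φ (univRed L C)
  | res {C₁ C₂} {p : Var} :
      QDer L φ C₁ → QDer L φ C₂ →
      ¬ Tauto C₁ → ¬ Tauto C₂ →
      quantOf L p = true → (⟨p, true⟩ : Lit) ∈ C₁ → (⟨p, false⟩ : Lit) ∈ C₂ →
      ¬ Tauto (qResolvent L C₁ C₂ p) →
      QDer L φ (qResolvent L C₁ C₂ p)

/-- The initial cube of a (total) model `α`: conjunction of the literals set by `α`,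
in prefix order. -/
def initCube (L : QPrefix) (α : Assignment) : Cube :=
  L.map (fun p => ⟨p.2, α p.2⟩)

/-- Tentative cube qResolvent of two cubes on universal pivot `x`. -/
def cubeResolvent (L : QPrefix) (C₁ C₂ : Cube) (x : Var) : Cube :=
  (exRed L C₁).filter (fun l => l ≠ ⟨x, true⟩) ++
  (exRed L C₂).filter (fun l => l ≠ ⟨x, false⟩)

/-- Cube derivations: model generation rule, existential reduction, cube resolution. -/
inductive CubeDer (L : QPrefix) (φ : CNF) : Cube → Prop
  | init (α : Assignment) : CNF.eval α φ = true → CubeDer L φ (initCube L α)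
  | er {C} : CubeDer L φ C → CubeDer L φ (exRed L C)
  | res {C₁ C₂} {x : Var} :
      CubeDer L φ C₁ → CubeDer L φ C₂ →
      ¬ Tauto C₁ → ¬ Tauto C₂ →
      quantOf L x = false → (⟨x, true⟩ : Lit) ∈ C₁ → (⟨x, false⟩ : Lit) ∈ C₂ →
      ¬ Tauto (cubeResolvent L C₁ C₂ x) →
      CubeDer L φ (cubeResolvent L C₁ C₂ x)

/-- Block-structured prefix: list of (quantifier, block of variables). -/
abbrev BPrefix := List (Bool × List Var)

def flatP (P : BPrefix) : QPrefix := P.flatMap (fun b => b.2.map (fun x => (b.1, x)))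

def SatB (P : BPrefix) (m : Assignment → Bool) : Prop := Sat (flatP P) m

/-- Closed PCNF with block prefix. -/
def ClosedB (P : BPrefix) (φ : CNF) : Prop :=
  (∀ v ∈ CNF.vars φ, v ∈ pvars (flatP P)) ∧
  (∀ v ∈ pvars (flatP P), v ∈ CNF.vars φ) ∧
  (pvars (flatP P)).Nodup



/-- Prefix of the running example: ∃x₁ ∀y₈ ∃x₅ x₂ x₆ x₄ (variable i named i). -/
def exPrefix : QPrefix := [(true, 1), (false, 8), (true, 5), (true, 2), (true, 6), (true, 4)]

def cl1 : Clause := [⟨8, true⟩, ⟨5, false⟩]   -- (y₈ ∨ ¬x₅)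
def cl2 : Clause := [⟨2, true⟩, ⟨6, false⟩]   -- (x₂ ∨ ¬x₆)
def cl3 : Clause := [⟨1, false⟩, ⟨4, true⟩]   -- (¬x₁ ∨ x₄)
def cl4 : Clause := [⟨8, false⟩, ⟨4, false⟩]  -- (¬y₈ ∨ ¬x₄)
def cl5 : Clause := [⟨1, true⟩, ⟨6, true⟩]    -- (x₁ ∨ x₆)
def cl6 : Clause := [⟨4, true⟩, ⟨5, true⟩]    -- (x₄ ∨ x₅)

/-- Matrix of Example 6 (clauses C₁–C₅). -/
def phi' : CNF := [cl1, cl2, cl3, cl4, cl5]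

/-- The added clause C₀ = (x₄ ∨ x₅). -/
def cl0' : Clause := [⟨4, true⟩, ⟨5, true⟩]

/-- The assignment A₃ = {¬x₁, y₈, ¬x₅, x₂, x₆, ¬x₄}. -/
def A3 : Assignment := fun v => decide (v = 8 ∨ v = 2 ∨ v = 6)

theorem CNF.eval_append_singleton (α : Assignment) (φ : CNF) (C : Clause) :
    CNF.eval α (φ ++ [C]) = (CNF.eval α φ && Clause.eval α C) := by
  simp [CNF.eval]

theorem CubeDer.exRed_initCube {L : QPrefix} {φ : CNF} {α : Assignment}
    (h : CNF.eval α φ = true) : CubeDer L φ (exRed L (initCube L α)) :=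
  .er (.init α h)

/-- Example 6: A₃ is a model of ψ but not of ψ₃ = ψ ∧ (x₄ ∨ x₅);
nevertheless the cube (¬x₁ ∧ y₈) has a cube derivation from ψ₃. -/
theorem initial_cube_nonderivable_but_reduced_derivable :
    CNF.eval A3 phi' = true ∧
    CNF.eval A3 (phi' ++ [cl0']) = false ∧
    CubeDer exPrefix (phi' ++ [cl0']) [⟨1, false⟩, ⟨8, true⟩] := by
  have hA3 : CNF.eval A3 phi' = true := by decide
  have hA3_cl0 : Clause.eval A3 cl0' = false := by decide
  -- Flipping x₅ in A₃ satisfies the new clause; reducing the resulting initial cube by the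
  -- universal y₈ removes every existential literal to its right.
  have hmodel : CNF.eval (Function.update A3 5 true) (phi' ++ [cl0']) = true := by decide
  have hred : exRed exPrefix (initCube exPrefix (Function.update A3 5 true)) =
      [⟨1, false⟩, ⟨8, true⟩] := by decide
  refine ⟨hA3, ?_, hred ▸ CubeDer.exRed_initCube hmodel⟩
  rw [CNF.eval_append_singleton, hA3, hA3_cl0]
  rfl
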